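/- If (X,Y) is a decomposition of a trigraph T that contains no odd hole, then the corresponding blocks T_X and T_Y contain no odd hole. -/

import Mathlib

structure Trigraph (V : Type*) where
  θ : V → V → ℤ
  symm : ∀ u v, θ u v = θ v u
  range : ∀ u v, u ≠ v → θ u v = -1 ∨ θ u v = 0 ∨ θ u v = 1

namespace Trigraph

variable {V : Type*}

/-- `u` and `v` form a strong edge. -/
def SEdge (T : Trigraph V) (u v : V) : Prop := u ≠ v ∧ T.θ u v = 1

/-- `u` and `v` form a strong antiedge. -/
def SAnti (T : Trigraph V) (u v : V) : Prop := u ≠ v ∧ T.θ u v = -1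

/-- `u` and `v` form a switchable pair. -/
def Switch (T : Trigraph V) (u v : V) : Prop := u ≠ v ∧ T.θ u v = 0

/-- `u` and `v` are adjacent. -/
def Adj (T : Trigraph V) (u v : V) : Prop := u ≠ v ∧ (T.θ u v = 0 ∨ T.θ u v = 1)

/-- `u` and `v` are antiadjacent. -/
def Anti (T : Trigraph V) (u v : V) : Prop := u ≠ v ∧ (T.θ u v = -1 ∨ T.θ u v = 0)

instance [DecidableEq V] (T : Trigraph V) (u v : V) : Decidable (T.Adj u v) :=
  inferInstanceAs (Decidable (u ≠ v ∧ (T.θ u v = 0 ∨ T.θ u v = 1)))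

instance [DecidableEq V] (T : Trigraph V) (u v : V) : Decidable (T.Anti u v) :=
  inferInstanceAs (Decidable (u ≠ v ∧ (T.θ u v = -1 ∨ T.θ u v = 0)))

instance [DecidableEq V] (T : Trigraph V) (u v : V) : Decidable (T.Switch u v) :=
  inferInstanceAs (Decidable (u ≠ v ∧ T.θ u v = 0))

instance [DecidableEq V] (T : Trigraph V) (u v : V) : Decidable (T.SAnti u v) :=
  inferInstanceAs (Decidable (u ≠ v ∧ T.θ u v = -1))

/-- A trigraph is monogamous if every vertex is in at most one switchable pair. -/
def Monogamous (T : Trigraph V) : Prop :=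
  ∀ v u w : V, T.Switch v u → T.Switch v w → u = w

/-- The complement trigraph. -/
def compl (T : Trigraph V) : Trigraph V where
  θ := fun u v => -(T.θ u v)
  symm := fun u v => congrArg Neg.neg (T.symm u v)
  range := fun u v h => by
    have := T.range u v h
    try dsimp only
    omega

def IsBull (T : Trigraph V) (x1 x2 x3 y z : V) : Prop :=
  T.Adj x1 x2 ∧ T.Adj x1 x3 ∧ T.Adj x2 x3 ∧
  T.Adj y x1 ∧ T.Anti y x2 ∧ T.Anti y x3 ∧ T.Anti y z ∧
  T.Adj z x2 ∧ T.Anti z x1 ∧ T.Anti z x3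

def BullFree (T : Trigraph V) : Prop := ∀ x1 x2 x3 y z : V, ¬ T.IsBull x1 x2 x3 y z

/-- `S` is strongly complete to `A`. -/
def SComplete (T : Trigraph V) (S A : Set V) : Prop := ∀ s ∈ S, ∀ a ∈ A, T.SEdge s a

/-- `S` is strongly anticomplete to `A`. -/
def SAnticomplete (T : Trigraph V) (S A : Set V) : Prop := ∀ s ∈ S, ∀ a ∈ A, T.SAnti s a

/-- A homogeneous set. -/
def HomSet (T : Trigraph V) (X : Set V) : Prop :=
  1 < X.ncard ∧ X.ncard < Nat.card V ∧
  ∀ v ∉ X, (∀ a ∈ X, T.SEdge v a) ∨ (∀ a ∈ X, T.SAnti v a)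

/-- `(A,B,C,D,E,F)` is a split of the homogeneous pair `(A,B)`. -/
def IsSplit (T : Trigraph V) (A B C D E F : Set V) : Prop :=
  A.Nonempty ∧ B.Nonempty ∧ Disjoint A B ∧
  Disjoint C D ∧ Disjoint C E ∧ Disjoint C F ∧
  Disjoint D E ∧ Disjoint D F ∧ Disjoint E F ∧
  C ∪ D ∪ E ∪ F = (A ∪ B)ᶜ ∧
  T.SComplete A (C ∪ E) ∧ T.SAnticomplete A (D ∪ F) ∧
  T.SComplete B (D ∪ E) ∧ T.SAnticomplete B (C ∪ F) ∧
  ¬ T.SComplete A B ∧ ¬ T.SAnticomplete A B ∧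
  3 ≤ (A ∪ B).ncard ∧ 3 ≤ (C ∪ D ∪ E ∪ F).ncard

/-- `(A,B)` is a homogeneous pair. -/
def HomPair (T : Trigraph V) (A B : Set V) : Prop := ∃ C D E F, T.IsSplit A B C D E F

/-- A small homogeneous pair. -/
def SmallHomPair (T : Trigraph V) (A B : Set V) : Prop :=
  T.HomPair A B ∧ (A ∪ B).ncard ≤ 6

/-- A proper homogeneous pair. -/
def ProperHomPair (T : Trigraph V) (A B : Set V) : Prop :=
  ∃ C D E F, T.IsSplit A B C D E F ∧ C.Nonempty ∧ D.Nonempty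

/-- `(X, Xᶜ)` is a decomposition of `T`. -/
def Decomp (T : Trigraph V) (X : Set V) : Prop :=
  T.HomSet X ∨ ∃ A B, X = A ∪ B ∧ (T.SmallHomPair A B ∨ T.ProperHomPair A B)

/-- `(X, Xᶜ)` is a homogeneous cut of `T`. -/
def HomCut (T : Trigraph V) (X : Set V) : Prop :=
  T.HomSet X ∨ ∃ A B, X = A ∪ B ∧ T.ProperHomPair A B

/-- A minimally-sided homogeneous cut. -/
def MinSidedHomCut (T : Trigraph V) (X : Set V) : Prop :=
  T.HomCut X ∧ ∀ X' : Set V, T.HomCut X' → ¬ X' ⊂ X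

/-- The induced subtrigraph on `X`. -/
def induce (T : Trigraph V) (X : Set V) : Trigraph X where
  θ := fun u v => T.θ u v
  symm := fun u v => T.symm u v
  range := fun u v h => T.range u v (fun hh => h (Subtype.ext hh))

open Classical in
/-- The trigraph obtained from `T[X]` by adding two marker vertices joined by a switchable
pair, the first strongly complete to (the trace in `X` of) `P` and strongly anticomplete to
the rest of `X`, the second strongly complete to `Q` and strongly anticomplete to the rest. -/
noncomputable def augment2 (T : Trigraph V) (X P Q : Set V) : Trigraph (↥X ⊕ Fin 2) where
  θ := fun u v =>
    match u, v with
    | Sum.inl u, Sum.inl v => T.θ u v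
    | Sum.inl u, Sum.inr i => if (i = 0 ∧ (u : V) ∈ P) ∨ (i = 1 ∧ (u : V) ∈ Q) then 1 else -1
    | Sum.inr i, Sum.inl u => if (i = 0 ∧ (u : V) ∈ P) ∨ (i = 1 ∧ (u : V) ∈ Q) then 1 else -1
    | Sum.inr _, Sum.inr _ => 0
  symm := by
    rintro (u | i) (v | j)
    · exact T.symm u v
    · rfl
    · rfl
    · rfl
  range := by
    rintro (u | i) (v | j) h
    · exact T.range u v fun hh => h (by rw [Subtype.ext hh])
    · dsimp only; split <;> simp
    · dsimp only; split <;> simp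
    · simp

/-- The block of decomposition `T_X` for a proper homogeneous pair `(A,B)`:
`T[A ∪ B]` together with marker vertices `c` (strongly complete to `A`) and `d`
(strongly complete to `B`), with `cd` a switchable pair. -/
noncomputable def blockXPair (T : Trigraph V) (A B : Set V) : Trigraph (↥(A ∪ B) ⊕ Fin 2) :=
  T.augment2 (A ∪ B) A B

/-- The block of decomposition `T_Y` for a homogeneous pair `(A,B)` with split
`(A,B,C,D,E,F)` : `T[Y]` (where `Y = (A ∪ B)ᶜ`) together with marker vertices `a`
(strongly complete to `C ∪ E`) and `b` (strongly complete to `D ∪ E`), with `ab` a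
switchable pair. -/
noncomputable def blockYPair (T : Trigraph V) (A B C D E : Set V) : Trigraph (↥(A ∪ B)ᶜ ⊕ Fin 2) :=
  T.augment2 (A ∪ B)ᶜ (C ∪ E) (D ∪ E)


/-- A strong clique: vertices pairwise strongly adjacent. -/
def StrongClique (T : Trigraph V) (K : Set V) : Prop := K.Pairwise T.SEdge

/-- A strong stable set: vertices pairwise strongly antiadjacent. -/
def StrongStable (T : Trigraph V) (K : Set V) : Prop := K.Pairwise T.SAnti

/-- `T[X]` is triangle-free. -/
def TriangleFreeOn (T : Trigraph V) (X : Set V) : Prop :=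
  ∀ x ∈ X, ∀ y ∈ X, ∀ z ∈ X, ¬ (T.Adj x y ∧ T.Adj x z ∧ T.Adj y z)

/-- Membership in the basic class `𝒯₁`. -/
def InT1 (T : Trigraph V) : Prop :=
  T.Monogamous ∧ ∃ (X : Set V) (t : ℕ) (K : Fin t → Set V),
    (X ∪ ⋃ i, K i) = Set.univ ∧
    (∀ i, Disjoint X (K i)) ∧ (∀ i j, i ≠ j → Disjoint (K i) (K j)) ∧
    T.TriangleFreeOn X ∧ (∀ i, T.StrongClique (K i)) ∧
    (∀ i j, i ≠ j → T.SAnticomplete (K i) (K j)) ∧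
    (∀ i, ∀ v ∈ K i, ∃ A B : Set V,
      A ∪ B = {x ∈ X | T.Adj v x} ∧ Disjoint A B ∧
      T.StrongStable A ∧ T.StrongStable B ∧ T.SComplete A B)

/-- Membership in the basic class `𝒯₀`: monogamous trigraphs on at most 8 vertices. -/
def InT0 (T : Trigraph V) : Prop := T.Monogamous ∧ Nat.card V ≤ 8

/-- A basic trigraph: a member of `𝒯₀ ∪ 𝒯₁ ∪ 𝒯₁bar`. -/
def Basic (T : Trigraph V) : Prop := T.InT0 ∨ T.InT1 ∨ T.compl.InT1

/-- `h` lists the vertices of a hole of length `k` in `T`. -/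
def IsHole (T : Trigraph V) (k : ℕ) (h : Fin k → V) : Prop :=
  4 ≤ k ∧ Function.Injective h ∧ ∀ i j : Fin k,
    (((i.val + 1) % k = j.val ∨ (j.val + 1) % k = i.val) → T.Adj (h i) (h j)) ∧
    (i ≠ j → ¬ ((i.val + 1) % k = j.val ∨ (j.val + 1) % k = i.val) → T.Anti (h i) (h j))

def HasOddHole (T : Trigraph V) : Prop := ∃ k, Odd k ∧ ∃ h : Fin k → V, T.IsHole k h

/-- A Berge trigraph: no odd hole and no odd antihole. -/
def Berge (T : Trigraph V) : Prop := ¬ T.HasOddHole ∧ ¬ T.compl.HasOddHole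

/-- `(wv, we)` are legitimate weights for the trigraph `T`: `we` is symmetric and for every
switchable pair `uv` we have `max (wv u) (wv v) ≤ we u v ≤ wv u + wv v`. -/
def GoodWeights (T : Trigraph V) (wv : V → ℕ) (we : V → V → ℕ) : Prop :=
  (∀ u v, we u v = we v u) ∧
  ∀ u v, T.Switch u v → max (wv u) (wv v) ≤ we u v ∧ we u v ≤ wv u + wv v

/-- `S` is a stable set of `T`. -/
def StableF (T : Trigraph V) (S : Finset V) : Prop :=
  ∀ u ∈ S, ∀ v ∈ S, u ≠ v → T.Anti u v

open Classical in
/-- The weight of a stable set `S`: the sum of the weights of the vertices of `S` that are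
strongly antiadjacent to every other vertex of `S`, plus the sum of the weights of the
switchable pairs with both ends in `S`. -/
noncomputable def weightF (T : Trigraph V) (wv : V → ℕ) (we : V → V → ℕ) (S : Finset V) : ℕ :=
  (∑ v ∈ S.filter (fun v => ∀ u ∈ S, u ≠ v → T.SAnti u v), wv v)
    + (∑ u ∈ S, ∑ v ∈ S, if T.Switch u v then we u v else 0) / 2

open Classical in
/-- The maximum weight of a stable set of `T` contained in `X`. -/
noncomputable def alphaOn [Fintype V] (T : Trigraph V) (wv : V → ℕ) (we : V → V → ℕ)
    (X : Set V) : ℕ :=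
  (Finset.univ.powerset.filter fun S : Finset V => ↑S ⊆ X ∧ T.StableF S).sup (T.weightF wv we)

/-- The maximum weight of a stable set of `T`. -/
noncomputable def alphaW [Fintype V] (T : Trigraph V) (wv : V → ℕ) (we : V → V → ℕ) : ℕ :=
  T.alphaOn wv we Set.univ

open Classical in
/-- The trigraph `T_{a → S}` obtained from `T` by turning the switchable pair `ab` into a
strong edge and adding a new vertex `a' = none` strongly complete to `N(a) ∖ {b}` and
strongly anticomplete to everything else (including `a`). -/
noncomputable def expandS (T : Trigraph V) (a b : V) : Trigraph (Option V) where
  θ := fun u v =>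
    match u, v with
    | some u, some v => if (u = a ∧ v = b) ∨ (u = b ∧ v = a) then 1 else T.θ u v
    | some u, none => if T.Adj a u ∧ u ≠ b then 1 else -1
    | none, some v => if T.Adj a v ∧ v ≠ b then 1 else -1
    | none, none => -1
  symm := by
    rintro (_ | u) (_ | v)
    · rfl
    · rfl
    · rfl
    · dsimp only
      have hiff : ((u = a ∧ v = b) ∨ (u = b ∧ v = a)) ↔ ((v = a ∧ u = b) ∨ (v = b ∧ u = a)) := by
        tauto
      rw [if_congr hiff rfl (T.symm u v)]
  range := by
    rintro (_ | u) (_ | v) h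
    · exact absurd rfl h
    · dsimp only; split <;> simp
    · dsimp only; split <;> simp
    · dsimp only
      split
      · simp
      · exact T.range u v fun hh => h (by rw [hh])

open Classical in
/-- The trigraph `T_{a → K}`, defined like `T_{a → S}` except that the new vertex `a'` is in
addition strongly adjacent to `a`. -/
noncomputable def expandK (T : Trigraph V) (a b : V) : Trigraph (Option V) where
  θ := fun u v =>
    match u, v with
    | some u, some v => if (u = a ∧ v = b) ∨ (u = b ∧ v = a) then 1 else T.θ u v
    | some u, none => if (T.Adj a u ∧ u ≠ b) ∨ u = a then 1 else -1
    | none, some v => if (T.Adj a v ∧ v ≠ b) ∨ v = a then 1 else -1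
    | none, none => -1
  symm := by
    rintro (_ | u) (_ | v)
    · rfl
    · rfl
    · rfl
    · dsimp only
      have hiff : ((u = a ∧ v = b) ∨ (u = b ∧ v = a)) ↔ ((v = a ∧ u = b) ∨ (v = b ∧ u = a)) := by
        tauto
      rw [if_congr hiff rfl (T.symm u v)]
  range := by
    rintro (_ | u) (_ | v) h
    · exact absurd rfl h
    · dsimp only; split <;> simp
    · dsimp only; split <;> simp
    · dsimp only
      split
      · simp
      · exact T.range u v fun hh => h (by rw [hh])

/-- Vertex weights for `T_{a → S}`. -/
def wvS (wv : V → ℕ) (we : V → V → ℕ) (a b : V) [DecidableEq V] : Option V → ℕ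
  | some v => if v = a then wv a + wv b - we a b else wv v
  | none => we a b - wv b

/-- Vertex weights for `T_{a → K}`. -/
def wvK (wv : V → ℕ) (we : V → V → ℕ) (a b : V) : Option V → ℕ
  | some v => wv v
  | none => we a b - wv b

/-- Switchable-pair weights for `T_{a → S}` and `T_{a → K}`. -/
def weO (we : V → V → ℕ) : Option V → Option V → ℕ
  | some u, some v => we u v
  | _, _ => 0

end Trigraph
/-!
A hole of a block meets the two marker vertices in at most two vertices. Replacing each marker
by a vertex of `T` outside the block that sees the rest of the block exactly as the marker does
(a vertex of `A` or `B` for the markers of `T_Y`, of `C` or `D` for those of `T_X`) turns the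
hole into a hole of `T` of the same length, provided that, when both markers occur, the two
replacements are adjacent or antiadjacent as the markers are in the hole. For `T_Y` this can be
arranged, since `A` is neither strongly complete nor strongly anticomplete to `B`. For `T_X` no
odd hole passes through both markers: every other vertex of such a hole lies in exactly one of
`A`, `B`, hence is a neighbour of exactly one marker, which forces the hole to have length
4 or 6.
-/

def Fin.CycAdj {k : ℕ} (i j : Fin k) : Prop := (i.val + 1) % k = j.val ∨ (j.val + 1) % k = i.val

theorem Fin.CycAdj.symm {k : ℕ} {i j : Fin k} (h : i.CycAdj j) : j.CycAdj i := Or.symm h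

theorem Nat.add_one_mod_eq_iff {a b k : ℕ} (ha : a < k) (hb : b < k) :
    (a + 1) % k = b ↔ a + 1 = b ∨ a + 1 = b + k := by
  rcases (Nat.succ_le_of_lt ha).lt_or_eq with h | h
  · rw [Nat.mod_eq_of_lt h]; omega
  · rw [show a + 1 = k from h, Nat.mod_self]; omega

theorem Fin.cycAdj_iff {k : ℕ} {i j : Fin k} :
    i.CycAdj j ↔ i.val + 1 = j.val ∨ i.val + 1 = j.val + k ∨
      j.val + 1 = i.val ∨ j.val + 1 = i.val + k := by
  rw [Fin.CycAdj, Nat.add_one_mod_eq_iff i.isLt j.isLt, Nat.add_one_mod_eq_iff j.isLt i.isLt,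
    or_assoc]

theorem Fin.exists_val_eq_add_or_val_add_eq {k : ℕ} (i : Fin k) {s : ℕ} (hs : s < k) :
    ∃ z : Fin k, z.val = i.val + s ∨ z.val + k = i.val + s := by
  rcases Nat.lt_or_ge (i.val + s) k with h | h
  · exact ⟨⟨i.val + s, h⟩, Or.inl rfl⟩
  · exact ⟨⟨i.val + s - k, by omega⟩, Or.inr (by dsimp only; omega)⟩

theorem Fin.exists_cycAdj_iff_cycAdj {k : ℕ} (hk : 5 ≤ k) (hodd : Odd k) {i j : Fin k}
    (hij : i ≠ j) : ∃ z, z ≠ i ∧ z ≠ j ∧ (z.CycAdj i ↔ z.CycAdj j) := by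
  obtain ⟨m, rfl⟩ := hodd
  rw [Ne, Fin.ext_iff] at hij
  simp only [Ne, Fin.ext_iff, Fin.cycAdj_iff]
  have hi := i.isLt
  have hj := j.isLt
  -- If `j = i ± 2`, the vertex between them sees both; otherwise `i + 2` or `i - 2` sees neither.
  by_cases hj2 : j.val = i.val + 2 ∨ j.val + (2 * m + 1) = i.val + 2
  · obtain ⟨z, hz⟩ := i.exists_val_eq_add_or_val_add_eq (s := 1) (by omega)
    exact ⟨z, by omega⟩
  by_cases hj2' : j.val + 2 = i.val ∨ j.val + 2 = i.val + (2 * m + 1)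
  · obtain ⟨z, hz⟩ := i.exists_val_eq_add_or_val_add_eq (s := 2 * m) (by omega)
    exact ⟨z, by omega⟩
  by_cases hj13 : j.val = i.val + 1 ∨ j.val + (2 * m + 1) = i.val + 1 ∨
      j.val = i.val + 3 ∨ j.val + (2 * m + 1) = i.val + 3
  · obtain ⟨z, hz⟩ := i.exists_val_eq_add_or_val_add_eq (s := 2 * m - 1) (by omega)
    exact ⟨z, by omega⟩
  · obtain ⟨z, hz⟩ := i.exists_val_eq_add_or_val_add_eq (s := 2) (by omega)
    exact ⟨z, by omega⟩

namespace Trigraph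

variable {V W : Type*} {T : Trigraph V} {T' : Trigraph W}

theorem Adj.symm {u v : V} (h : T.Adj u v) : T.Adj v u := ⟨h.1.symm, T.symm u v ▸ h.2⟩

theorem Anti.symm {u v : V} (h : T.Anti u v) : T.Anti v u := ⟨h.1.symm, T.symm u v ▸ h.2⟩

theorem Adj.of_θ_eq {u v : W} {x y : V} (h : T'.Adj u v) (hxy : x ≠ y)
    (hθ : T.θ x y = T'.θ u v) : T.Adj x y :=
  ⟨hxy, hθ ▸ h.2⟩

theorem Anti.of_θ_eq {u v : W} {x y : V} (h : T'.Anti u v) (hxy : x ≠ y)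
    (hθ : T.θ x y = T'.θ u v) : T.Anti x y :=
  ⟨hxy, hθ ▸ h.2⟩

theorem IsHole.cycAdj_iff {k : ℕ} {h : Fin k → V} (hh : T.IsHole k h) {i j : Fin k}
    (hij : i ≠ j) (hθ : T.θ (h i) (h j) ≠ 0) : i.CycAdj j ↔ T.θ (h i) (h j) = 1 := by
  refine ⟨fun hc => ((hh.2.2 i j).1 hc).2.resolve_left hθ, fun h1 => ?_⟩
  by_contra hc
  have := ((hh.2.2 i j).2 hij hc).2
  omega

theorem HasOddHole.of_induce {X : Set V} : (T.induce X).HasOddHole → T.HasOddHole := by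
  rintro ⟨k, hodd, h, hk, hinj, hh⟩
  refine ⟨k, hodd, (↑) ∘ h, hk, Subtype.val_injective.comp hinj,
    fun i j => ⟨fun hc => ?_, ?_⟩⟩
  · have hadj := (hh i j).1 hc
    exact hadj.of_θ_eq (Subtype.val_injective.ne hadj.1) rfl
  · intro hij hc
    have hanti := (hh i j).2 hij hc
    exact hanti.of_θ_eq (Subtype.val_injective.ne hanti.1) rfl

open Classical in
/-- `p` lies outside `X` and sees `X` as the marker of `P` does in `T.augment2 X P Q`. -/
def IsMarkerFor (T : Trigraph V) (X P : Set V) (p : V) : Prop :=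
  p ∉ X ∧ ∀ x ∈ X, T.θ p x = if x ∈ P then 1 else -1

section augment2

variable {X P Q : Set V}

open Classical in
@[simp]
theorem augment2_θ_inl_inr_zero (x : X) :
    (T.augment2 X P Q).θ (.inl x) (.inr 0) = if (x : V) ∈ P then 1 else -1 := by
  simp [augment2]

open Classical in
@[simp]
theorem augment2_θ_inl_inr_one (x : X) :
    (T.augment2 X P Q).θ (.inl x) (.inr 1) = if (x : V) ∈ Q then 1 else -1 := by
  simp [augment2]

theorem θ_sumElim_eq_augment2_θ {p q : V} (hp : T.IsMarkerFor X P p) (hq : T.IsMarkerFor X Q q)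
    (u v : X ⊕ Fin 2) (huv : u.isLeft ∨ v.isLeft) :
    T.θ (Sum.elim (↑) ![p, q] u) (Sum.elim (↑) ![p, q] v) = (T.augment2 X P Q).θ u v := by
  have hmark : ∀ (x : X) (t : Fin 2),
      T.θ (![p, q] t) x = (T.augment2 X P Q).θ (.inl x) (.inr t) := by
    intro x t
    fin_cases t
    · simpa using hp.2 x x.2
    · simpa using hq.2 x x.2
  rcases u with x | s <;> rcases v with y | t
  · rfl
  · simpa [T.symm (x : V)] using hmark x t
  · simpa [(T.augment2 X P Q).symm (.inr s)] using hmark y s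
  · simp at huv

theorem injective_sumElim {p q : V} (hp : p ∉ X) (hq : q ∉ X) (hpq : p ≠ q) :
    Function.Injective (Sum.elim ((↑) : X → V) ![p, q]) := by
  refine Subtype.val_injective.sumElim (injective_pair_iff_ne.mpr hpq) fun x t => ?_
  fin_cases t
  · exact fun h => hp (by simpa [h] using x.2)
  · exact fun h => hq (by simpa [h] using x.2)

theorem IsHole.sumElim_comp {k : ℕ} {h : Fin k → X ⊕ Fin 2}
    (hh : (T.augment2 X P Q).IsHole k h) {p q : V} (hp : T.IsMarkerFor X P p)
    (hq : T.IsMarkerFor X Q q) (hpq : p ≠ q)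
    (hmark : ∀ i j, h i = .inr 0 → h j = .inr 1 →
      (i.CycAdj j → T.Adj p q) ∧ (¬ i.CycAdj j → T.Anti p q)) :
    T.IsHole k (Sum.elim (↑) ![p, q] ∘ h) := by
  have hinj := (injective_sumElim hp.1 hq.1 hpq).comp hh.2.1
  refine ⟨hh.1, hinj, fun i j => ?_⟩
  obtain ⟨hadj, hanti⟩ := hh.2.2 i j
  by_cases hleft : (h i).isLeft ∨ (h j).isLeft
  · have hθ := θ_sumElim_eq_augment2_θ hp hq _ _ hleft
    exact ⟨fun hc => (hadj hc).of_θ_eq (hinj.ne fun e => (hadj hc).1 (e ▸ rfl)) hθ,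
      fun hij hc => (hanti hij hc).of_θ_eq (hinj.ne hij) hθ⟩
  obtain ⟨s, hs⟩ := Sum.isRight_iff.mp (Sum.not_isLeft.mp (not_or.mp hleft).1)
  obtain ⟨t, ht⟩ := Sum.isRight_iff.mp (Sum.not_isLeft.mp (not_or.mp hleft).2)
  by_cases hij : i = j
  · subst hij
    exact ⟨fun hc => absurd rfl (hadj hc).1, fun hne => absurd rfl hne⟩
  have hst : s ≠ t := fun e => hij (hh.2.1 (hs.trans (e ▸ ht.symm)))
  simp only [Function.comp_apply, hs, ht, Sum.elim_inr]
  fin_cases s <;> fin_cases t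
  · exact absurd rfl hst
  · exact ⟨(hmark i j hs ht).1, fun _ => (hmark i j hs ht).2⟩
  · exact ⟨fun hc => ((hmark j i ht hs).1 (Fin.CycAdj.symm hc)).symm,
      fun _ hc => ((hmark j i ht hs).2 fun hc' => hc hc'.symm).symm⟩
  · exact absurd rfl hst

theorem IsHole.not_both_markers {k : ℕ} (hodd : Odd k) {h : Fin k → X ⊕ Fin 2}
    (hh : (T.augment2 X P Q).IsHole k h) (hPQ : ∀ x ∈ X, x ∈ P ↔ x ∉ Q) {i j : Fin k}
    (hi : h i = .inr 0) (hj : h j = .inr 1) : False := by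
  have hk : 5 ≤ k := by obtain ⟨m, rfl⟩ := hodd; have := hh.1; omega
  have hij : i ≠ j := fun e => by simp [e, hj] at hi
  obtain ⟨z, hzi, hzj, hz⟩ := Fin.exists_cycAdj_iff_cycAdj hk hodd hij
  obtain ⟨x, hx⟩ : ∃ x, h z = .inl x := by
    rcases hzv : h z with x | t
    · exact ⟨x, rfl⟩
    · fin_cases t
      · exact absurd (hh.2.1 (hzv.trans hi.symm)) hzi
      · exact absurd (hh.2.1 (hzv.trans hj.symm)) hzj
  rw [hh.cycAdj_iff hzi (by rw [hx, hi, augment2_θ_inl_inr_zero]; split_ifs <;> norm_num),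
    hh.cycAdj_iff hzj (by rw [hx, hj, augment2_θ_inl_inr_one]; split_ifs <;> norm_num)] at hz
  simp only [hx, hi, hj, augment2_θ_inl_inr_zero, augment2_θ_inl_inr_one] at hz
  have := hPQ x x.2
  split_ifs at hz <;> simp_all

end augment2

section split

variable {A B C D E F : Set V}

theorem IsSplit.exists_adj (hs : T.IsSplit A B C D E F) :
    ∃ v ∈ A, ∃ w ∈ B, T.Adj v w := by
  obtain ⟨-, -, hAB, -, -, -, -, -, -, -, -, -, -, -, -, hna, -, -⟩ := hs
  contrapose! hna
  intro v hv w hw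
  have hvw : v ≠ w := fun e => Set.disjoint_left.mp hAB hv (e ▸ hw)
  have hr := T.range v w hvw
  have hn := hna v hv w hw
  simp only [Adj] at hn
  exact ⟨hvw, by tauto⟩

theorem IsSplit.exists_anti (hs : T.IsSplit A B C D E F) :
    ∃ v ∈ A, ∃ w ∈ B, T.Anti v w := by
  obtain ⟨-, -, hAB, -, -, -, -, -, -, -, -, -, -, -, hnc, -, -, -⟩ := hs
  contrapose! hnc
  intro v hv w hw
  have hvw : v ≠ w := fun e => Set.disjoint_left.mp hAB hv (e ▸ hw)
  have hr := T.range v w hvw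
  have hn := hnc v hv w hw
  simp only [Anti] at hn
  exact ⟨hvw, by tauto⟩

theorem IsSplit.isMarkerFor_compl_left (hs : T.IsSplit A B C D E F) {v : V} (hv : v ∈ A) :
    T.IsMarkerFor (A ∪ B)ᶜ (C ∪ E) v := by
  obtain ⟨-, -, -, -, -, -, -, -, -, hU, hAC, hAD, -⟩ := hs
  refine ⟨fun h => h (Or.inl hv), fun x hx => ?_⟩
  rw [← hU] at hx
  split_ifs with hCE
  · exact (hAC v hv x hCE).2
  · exact (hAD v hv x (by simp only [Set.mem_union] at hx hCE ⊢; tauto)).2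

theorem IsSplit.isMarkerFor_compl_right (hs : T.IsSplit A B C D E F) {w : V} (hw : w ∈ B) :
    T.IsMarkerFor (A ∪ B)ᶜ (D ∪ E) w := by
  obtain ⟨-, -, -, -, -, -, -, -, -, hU, -, -, hBD, hBC, -⟩ := hs
  refine ⟨fun h => h (Or.inr hw), fun x hx => ?_⟩
  rw [← hU] at hx
  split_ifs with hDE
  · exact (hBD w hw x hDE).2
  · exact (hBC w hw x (by simp only [Set.mem_union] at hx hDE ⊢; tauto)).2

theorem IsSplit.isMarkerFor_union_left (hs : T.IsSplit A B C D E F) {c : V} (hc : c ∈ C) :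
    T.IsMarkerFor (A ∪ B) A c := by
  obtain ⟨-, -, -, -, -, -, -, -, -, hU, hAC, -, -, hBC, -⟩ := hs
  refine ⟨(hU ▸ Or.inl (Or.inl (Or.inl hc)) : c ∈ (A ∪ B)ᶜ), fun x hx => ?_⟩
  rw [T.symm]
  split_ifs with hxA
  · exact (hAC x hxA c (Or.inl hc)).2
  · exact (hBC x (hx.resolve_left hxA) c (Or.inl hc)).2

theorem IsSplit.isMarkerFor_union_right (hs : T.IsSplit A B C D E F) {d : V} (hd : d ∈ D) :
    T.IsMarkerFor (A ∪ B) B d := by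
  obtain ⟨-, -, -, -, -, -, -, -, -, hU, -, hAD, hBD, -⟩ := hs
  refine ⟨(hU ▸ Or.inl (Or.inl (Or.inr hd)) : d ∈ (A ∪ B)ᶜ), fun x hx => ?_⟩
  rw [T.symm]
  split_ifs with hxB
  · exact (hBD x hxB d (Or.inl hd)).2
  · exact (hAD x (hx.resolve_right hxB) d (Or.inl hd)).2

theorem IsSplit.not_hasOddHole_blockYPair (hs : T.IsSplit A B C D E F) (hT : ¬T.HasOddHole) :
    ¬(T.blockYPair A B C D E).HasOddHole := by
  rintro ⟨k, hodd, h, hh⟩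
  by_cases hcons : ∃ i j, h i = .inr 0 ∧ h j = .inr 1 ∧ i.CycAdj j
  · obtain ⟨i, j, hi, hj, hc⟩ := hcons
    obtain ⟨v, hv, w, hw, hvw⟩ := hs.exists_adj
    refine hT ⟨k, hodd, _, hh.sumElim_comp (hs.isMarkerFor_compl_left hv)
      (hs.isMarkerFor_compl_right hw) hvw.1 fun i' j' hi' hj' => ⟨fun _ => hvw, fun hn => ?_⟩⟩
    rw [hh.2.1 (hi'.trans hi.symm), hh.2.1 (hj'.trans hj.symm)] at hn
    exact absurd hc hn
  · obtain ⟨v, hv, w, hw, hvw⟩ := hs.exists_anti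
    exact hT ⟨k, hodd, _, hh.sumElim_comp (hs.isMarkerFor_compl_left hv)
      (hs.isMarkerFor_compl_right hw) hvw.1
      fun i j hi hj => ⟨fun hc => absurd ⟨i, j, hi, hj, hc⟩ hcons, fun _ => hvw⟩⟩

theorem IsSplit.not_hasOddHole_blockXPair (hs : T.IsSplit A B C D E F) (hT : ¬T.HasOddHole)
    (hC : C.Nonempty) (hD : D.Nonempty) : ¬(T.blockXPair A B).HasOddHole := by
  rintro ⟨k, hodd, h, hh⟩
  obtain ⟨c, hc⟩ := hC
  obtain ⟨d, hd⟩ := hD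
  have hmc := hs.isMarkerFor_union_left hc
  have hmd := hs.isMarkerFor_union_right hd
  obtain ⟨-, -, hAB, hCD, -⟩ := hs
  have hAB' : ∀ x ∈ A ∪ B, x ∈ A ↔ x ∉ B := fun x hx =>
    ⟨fun hxA hxB => Set.disjoint_left.mp hAB hxA hxB, hx.resolve_right⟩
  have hcd : c ≠ d := fun e => Set.disjoint_left.mp hCD hc (e ▸ hd)
  exact hT ⟨k, hodd, _, hh.sumElim_comp hmc hmd hcd
    fun i j hi hj => (hh.not_both_markers hodd hAB' hi hj).elim⟩

end split

end Trigraph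

theorem blocks_no_odd_hole_general {V : Type} (T : Trigraph V)
    (hT : ¬ T.HasOddHole) :
    (∀ X : Set V, T.HomSet X →
      ¬ (T.induce X).HasOddHole ∧
      ∀ x ∈ X, ¬ (T.induce (Xᶜ ∪ {x})).HasOddHole) ∧
    (∀ A B C D E F : Set V, T.IsSplit A B C D E F → (A ∪ B).ncard ≤ 6 →
      ¬ (T.induce (A ∪ B)).HasOddHole ∧ ¬ (T.blockYPair A B C D E).HasOddHole) ∧
    (∀ A B C D E F : Set V, T.IsSplit A B C D E F → C.Nonempty → D.Nonempty →
      ¬ (T.blockXPair A B).HasOddHole ∧ ¬ (T.blockYPair A B C D E).HasOddHole) := by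
  have hinduce : ∀ X : Set V, ¬(T.induce X).HasOddHole := fun _ =>
    mt Trigraph.HasOddHole.of_induce hT
  refine ⟨fun X _ => ⟨hinduce X, fun x _ => hinduce _⟩,
    fun A B C D E F hs _ => ⟨hinduce _, hs.not_hasOddHole_blockYPair hT⟩,
    fun A B C D E F hs hC hD =>
      ⟨hs.not_hasOddHole_blockXPair hT hC hD, hs.not_hasOddHole_blockYPair hT⟩⟩

/-- If `(X, Y)` is a decomposition of a trigraph `T` that contains no odd hole, then the
corresponding blocks `T_X` and `T_Y` contain no odd hole (all three kinds of decompositions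
and corresponding blocks are treated). -/
theorem blocks_no_odd_hole {V : Type} [Fintype V] [DecidableEq V] (T : Trigraph V)
    (hT : ¬ T.HasOddHole) :
    (∀ X : Set V, T.HomSet X →
      ¬ (T.induce X).HasOddHole ∧
      ∀ x ∈ X, ¬ (T.induce (Xᶜ ∪ {x})).HasOddHole) ∧
    (∀ A B C D E F : Set V, T.IsSplit A B C D E F → (A ∪ B).ncard ≤ 6 →
      ¬ (T.induce (A ∪ B)).HasOddHole ∧ ¬ (T.blockYPair A B C D E).HasOddHole) ∧
    (∀ A B C D E F : Set V, T.IsSplit A B C D E F → C.Nonempty → D.Nonempty →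
      ¬ (T.blockXPair A B).HasOddHole ∧ ¬ (T.blockYPair A B C D E).HasOddHole) :=
  blocks_no_odd_hole_general T hT
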